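/- Let T be a Tychonoff (T3.5) topological space and let ξ : 𝒫(ℂ) → [0,∞] satisfy (MN1)–(MN6). Then the functional Ω : 𝒫(C^b(T)) → [0,∞] defined by Ω(ℱ) := ω(ℱ) + η(ℱ) satisfies all axioms (MN1)–(MN6); in particular, Ω(ℱ) = 0 if and only if ℱ is relatively compact in C^b(T), so Ω is a measure of non-compactness on C^b(T). -/

import Mathlib

/-! The oscillation quantity `f̂(u) − f(t)` is `ℂ`-linear and `2`-Lipschitz in `f`, so `ω` is
insensitive to closures, convex hulls and finite sets, and scales like a seminorm. For compactness,
`ω(ℱ) = 0` means that around every point of the compact space `βT` all members of `ℱ` oscillate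
uniformly little; a finite subcover gives finitely many points of `T` that control every `f ∈ ℱ`
up to `ε` everywhere, and `η(ℱ) = 0` makes `ℱ` totally bounded at those points. -/

open BoundedContinuousFunction ENNReal Pointwise

variable {T : Type*} [TopologicalSpace T]

/-- `ω^u(ℱ, W) := sup { |f̂(u) − f(t)| : f ∈ ℱ, t ∈ T, φ(t) ∈ W } ∈ [0,∞]`, where
`hat f = f̂` is the continuous extension of `f` to the Stone–Čech compactification. -/
noncomputable def omegaUW (hat : BoundedContinuousFunction T ℂ → C(StoneCech T, ℂ))
    (ℱ : Set (BoundedContinuousFunction T ℂ)) (u : StoneCech T) (W : Set (StoneCech T)) :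
    ℝ≥0∞ :=
  ⨆ f ∈ ℱ, ⨆ t ∈ (stoneCechUnit ⁻¹' W : Set T), (‖hat f u - f t‖₊ : ℝ≥0∞)

/-- `ω^u(ℱ) := inf { ω^u(ℱ, W) : W ⊆ βT open, u ∈ W }`. -/
noncomputable def omegaU (hat : BoundedContinuousFunction T ℂ → C(StoneCech T, ℂ))
    (ℱ : Set (BoundedContinuousFunction T ℂ)) (u : StoneCech T) : ℝ≥0∞ :=
  ⨅ (W : Set (StoneCech T)) (_ : IsOpen W ∧ u ∈ W), omegaUW hat ℱ u W

/-- `ω(ℱ) := sup_{u ∈ βT} ω^u(ℱ)`, the measure of non-ω-equicontinuity. -/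
noncomputable def omegaMeasure (hat : BoundedContinuousFunction T ℂ → C(StoneCech T, ℂ))
    (ℱ : Set (BoundedContinuousFunction T ℂ)) : ℝ≥0∞ :=
  ⨆ u : StoneCech T, omegaU hat ℱ u

open Set

def IsStoneCechExtension (hat : (T →ᵇ ℂ) → C(StoneCech T, ℂ)) : Prop :=
  ∀ f : T →ᵇ ℂ, ∀ t : T, hat f (stoneCechUnit t) = f t

namespace IsStoneCechExtension

variable {hat : (T →ᵇ ℂ) → C(StoneCech T, ℂ)}

lemma apply_stoneCechUnit (hhat : IsStoneCechExtension hat) (f : T →ᵇ ℂ) (t : T) :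
    hat f (stoneCechUnit t) = f t :=
  hhat f t

lemma eq_of_forall_apply_stoneCechUnit (hhat : IsStoneCechExtension hat) {f : T →ᵇ ℂ}
    {g : C(StoneCech T, ℂ)} (h : ∀ t, g (stoneCechUnit t) = f t) : hat f = g :=
  ContinuousMap.coe_injective <|
    Continuous.ext_on denseRange_stoneCechUnit (hat f).continuous g.continuous <| by
      rintro _ ⟨t, rfl⟩
      rw [hhat, h]

lemma map_add (hhat : IsStoneCechExtension hat) (f g : T →ᵇ ℂ) : hat (f + g) = hat f + hat g :=
  hhat.eq_of_forall_apply_stoneCechUnit fun t => by simp [hhat.apply_stoneCechUnit]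

lemma map_smul {R : Type*} [NormedField R] [NormedSpace R ℂ] (hhat : IsStoneCechExtension hat)
    (c : R) (f : T →ᵇ ℂ) : hat (c • f) = c • hat f :=
  hhat.eq_of_forall_apply_stoneCechUnit fun t => by simp [hhat.apply_stoneCechUnit]

lemma norm_apply_le (hhat : IsStoneCechExtension hat) (f : T →ᵇ ℂ) (u : StoneCech T) :
    ‖hat f u‖ ≤ ‖f‖ := by
  have hclosed : IsClosed {v : StoneCech T | ‖hat f v‖ ≤ ‖f‖} :=
    isClosed_le (hat f).continuous.norm continuous_const
  refine closure_minimal ?_ hclosed (denseRange_stoneCechUnit u)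
  rintro _ ⟨t, rfl⟩
  simpa only [mem_ofPred_eq, hhat.apply_stoneCechUnit] using f.norm_coe_le_norm t

lemma edist_apply_le (hhat : IsStoneCechExtension hat) (f g : T →ᵇ ℂ) (u : StoneCech T) :
    edist (hat f u) (hat g u) ≤ edist f g := by
  have hsub : hat f - hat g = hat (f - g) :=
    (hhat.eq_of_forall_apply_stoneCechUnit fun t => by simp [hhat.apply_stoneCechUnit]).symm
  rw [edist_dist, edist_dist, dist_eq_norm, dist_eq_norm, ← ContinuousMap.sub_apply, hsub]
  exact ENNReal.ofReal_le_ofReal (hhat.norm_apply_le _ u)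

noncomputable def evalSub (hhat : IsStoneCechExtension hat) (u : StoneCech T) (t : T) :
    (T →ᵇ ℂ) →ₗ[ℂ] ℂ where
  toFun f := hat f u - f t
  map_add' f g := by
    simp only [hhat.map_add, ContinuousMap.add_apply, BoundedContinuousFunction.add_apply]
    ring
  map_smul' c f := by simp [hhat.map_smul, mul_sub]

@[simp]
lemma evalSub_apply (hhat : IsStoneCechExtension hat) (u : StoneCech T) (t : T) (f : T →ᵇ ℂ) :
    hhat.evalSub u t f = hat f u - f t :=
  rfl

end IsStoneCechExtension

lemma ENNReal.le_of_forall_pos_le_add_two_mul {a b : ℝ≥0∞}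
    (h : ∀ ε : ℝ≥0∞, 0 < ε → a ≤ b + 2 * ε) : a ≤ b := by
  refine ENNReal.le_of_forall_pos_le_add fun ε hε _ => ?_
  simpa [ENNReal.mul_div_cancel two_ne_zero ENNReal.ofNat_ne_top] using
    h (ε / 2) (ENNReal.half_pos (by exact_mod_cast hε.ne'))

section Omega

variable {hat : (T →ᵇ ℂ) → C(StoneCech T, ℂ)} {ℱ 𝒢 : Set (T →ᵇ ℂ)} {u : StoneCech T}
  {W W' : Set (StoneCech T)}

lemma omegaUW_eq_iSup_edist :
    omegaUW hat ℱ u W = ⨆ f ∈ ℱ, ⨆ t ∈ stoneCechUnit ⁻¹' W, edist (hat f u) (f t) := by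
  simp only [omegaUW, edist_eq_enorm_sub, enorm_eq_nnnorm]

lemma omegaUW_le_iff {c : ℝ≥0∞} :
    omegaUW hat ℱ u W ≤ c ↔ ∀ f ∈ ℱ, ∀ t, stoneCechUnit t ∈ W → edist (hat f u) (f t) ≤ c := by
  simp only [omegaUW_eq_iSup_edist, iSup_le_iff, mem_preimage]

lemma edist_le_omegaUW {f : T →ᵇ ℂ} {t : T} (hf : f ∈ ℱ) (ht : stoneCechUnit t ∈ W) :
    edist (hat f u) (f t) ≤ omegaUW hat ℱ u W :=
  omegaUW_le_iff.1 le_rfl f hf t ht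

lemma omegaUW_mono (hℱ : ℱ ⊆ 𝒢) (hW : W ⊆ W') : omegaUW hat ℱ u W ≤ omegaUW hat 𝒢 u W' :=
  omegaUW_le_iff.2 fun _ hf _ ht => edist_le_omegaUW (hℱ hf) (hW ht)

lemma omegaUW_union : omegaUW hat (ℱ ∪ 𝒢) u W = omegaUW hat ℱ u W ⊔ omegaUW hat 𝒢 u W :=
  iSup_union

lemma omegaU_le_omegaUW (hW : IsOpen W) (hu : u ∈ W) : omegaU hat ℱ u ≤ omegaUW hat ℱ u W :=
  iInf₂_le W ⟨hW, hu⟩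

lemma omegaU_mono (h : ℱ ⊆ 𝒢) : omegaU hat ℱ u ≤ omegaU hat 𝒢 u :=
  iInf₂_mono fun _ _ => omegaUW_mono h le_rfl

lemma omegaMeasure_mono (h : ℱ ⊆ 𝒢) : omegaMeasure hat ℱ ≤ omegaMeasure hat 𝒢 :=
  iSup_mono fun _ => omegaU_mono h

lemma omegaU_union : omegaU hat (ℱ ∪ 𝒢) u = omegaU hat ℱ u ⊔ omegaU hat 𝒢 u := by
  refine le_antisymm ?_ (sup_le (omegaU_mono subset_union_left) (omegaU_mono subset_union_right))
  conv_rhs => rw [omegaU, omegaU, iInf₂_sup_eq]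
  refine le_iInf₂ fun W₁ hW₁ => ?_
  rw [sup_iInf₂_eq]
  refine le_iInf₂ fun W₂ hW₂ => ?_
  calc omegaU hat (ℱ ∪ 𝒢) u
      ≤ omegaUW hat (ℱ ∪ 𝒢) u (W₁ ∩ W₂) :=
        omegaU_le_omegaUW (hW₁.1.inter hW₂.1) ⟨hW₁.2, hW₂.2⟩
    _ = omegaUW hat ℱ u (W₁ ∩ W₂) ⊔ omegaUW hat 𝒢 u (W₁ ∩ W₂) := omegaUW_union
    _ ≤ omegaUW hat ℱ u W₁ ⊔ omegaUW hat 𝒢 u W₂ :=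
        sup_le_sup (omegaUW_mono le_rfl inter_subset_left) (omegaUW_mono le_rfl inter_subset_right)

lemma omegaU_singleton (hhat : IsStoneCechExtension hat) (g : T →ᵇ ℂ) (u : StoneCech T) :
    omegaU hat {g} u = 0 := by
  refine le_antisymm (ENNReal.le_of_forall_pos_le_add fun ε hε _ => ?_) bot_le
  let W := hat g ⁻¹' Metric.eball (hat g u) ε
  have hW : IsOpen W := Metric.isOpen_eball.preimage (hat g).continuous
  have hu : u ∈ W := Metric.mem_eball_self (by exact_mod_cast hε)
  refine (omegaU_le_omegaUW hW hu).trans (omegaUW_le_iff.2 ?_)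
  rintro f rfl t ht
  rw [zero_add, ← hhat, edist_comm]
  exact (Metric.mem_eball.1 ht).le

lemma omegaU_of_finite (hhat : IsStoneCechExtension hat) (h𝒢 : 𝒢.Finite) (u : StoneCech T) :
    omegaU hat 𝒢 u = 0 := by
  induction 𝒢, h𝒢 using Set.Finite.induction_on with
  | empty =>
    exact nonpos_iff_eq_zero.1
      ((omegaU_mono (empty_subset {0})).trans_eq (omegaU_singleton hhat 0 u))
  | insert _ _ ih => rw [insert_eq, omegaU_union, omegaU_singleton hhat, ih, sup_idem]

lemma omegaU_union_finite (hhat : IsStoneCechExtension hat) (h𝒢 : 𝒢.Finite) (u : StoneCech T) :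
    omegaU hat (ℱ ∪ 𝒢) u = omegaU hat ℱ u := by
  rw [omegaU_union, omegaU_of_finite hhat h𝒢, max_eq_left zero_le]

/-- The factor `2`: `f ↦ f̂(u) − f(t)` is `2`-Lipschitz. -/
lemma omegaU_le_add_of_forall_exists_edist_lt (hhat : IsStoneCechExtension hat) {δ : ℝ≥0∞}
    (h : ∀ f ∈ ℱ, ∃ g ∈ 𝒢, edist f g < δ) (u : StoneCech T) :
    omegaU hat ℱ u ≤ omegaU hat 𝒢 u + 2 * δ := by
  rw [← tsub_le_iff_right]
  refine le_iInf₂ fun W hW => tsub_le_iff_right.2 <|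
    (omegaU_le_omegaUW hW.1 hW.2).trans (omegaUW_le_iff.2 fun f hf t ht => ?_)
  obtain ⟨g, hg, hfg⟩ := h f hf
  calc edist (hat f u) (f t)
      ≤ edist (hat f u) (hat g u) + edist (hat g u) (g t) + edist (g t) (f t) :=
        edist_triangle4 _ _ _ _
    _ ≤ edist f g + omegaUW hat 𝒢 u W + edist f g := by
        gcongr
        · exact hhat.edist_apply_le f g u
        · exact edist_le_omegaUW hg ht
        · rw [edist_comm, edist_eq_iSup]
          exact le_iSup (fun x => edist (f x) (g x)) t
    _ = omegaUW hat 𝒢 u W + 2 * edist f g := by ring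
    _ ≤ omegaUW hat 𝒢 u W + 2 * δ := by gcongr

lemma omegaU_closure (hhat : IsStoneCechExtension hat) (ℱ : Set (T →ᵇ ℂ)) (u : StoneCech T) :
    omegaU hat (closure ℱ) u = omegaU hat ℱ u :=
  le_antisymm
    (ENNReal.le_of_forall_pos_le_add_two_mul fun _ hε =>
      omegaU_le_add_of_forall_exists_edist_lt hhat
        (fun _ hf => EMetric.mem_closure_iff.1 hf _ hε) u)
    (omegaU_mono subset_closure)

lemma omegaU_eq_zero_of_totallyBounded (hhat : IsStoneCechExtension hat) (hℱ : TotallyBounded ℱ)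
    (u : StoneCech T) : omegaU hat ℱ u = 0 := by
  refine le_antisymm (ENNReal.le_of_forall_pos_le_add_two_mul fun ε hε => ?_) bot_le
  obtain ⟨𝒢, h𝒢, hℱ𝒢⟩ := EMetric.totallyBounded_iff.1 hℱ ε hε
  have h := omegaU_le_add_of_forall_exists_edist_lt (𝒢 := 𝒢) hhat
    (fun f hf => by simpa using hℱ𝒢 hf) u
  rwa [omegaU_of_finite hhat h𝒢] at h

lemma omegaUW_smul (hhat : IsStoneCechExtension hat) (l : ℂ) (ℱ : Set (T →ᵇ ℂ))
    (u : StoneCech T) (W : Set (StoneCech T)) :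
    omegaUW hat (l • ℱ) u W = (‖l‖₊ : ℝ≥0∞) * omegaUW hat ℱ u W := by
  simp only [omegaUW_eq_iSup_edist, ← image_smul, iSup_image, hhat.map_smul,
    ContinuousMap.smul_apply, BoundedContinuousFunction.smul_apply, edist_smul₀]
  simp only [ENNReal.smul_def, smul_eq_mul, ENNReal.mul_iSup]

lemma omegaU_smul (hhat : IsStoneCechExtension hat) (l : ℂ) (ℱ : Set (T →ᵇ ℂ))
    (u : StoneCech T) : omegaU hat (l • ℱ) u = (‖l‖₊ : ℝ≥0∞) * omegaU hat ℱ u := by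
  simp only [omegaU, omegaUW_smul hhat]
  rw [iInf_subtype', iInf_subtype']
  exact (ENNReal.mul_iInf' (fun h => absurd h ENNReal.coe_ne_top)
    (fun _ => ⟨⟨univ, isOpen_univ, mem_univ u⟩⟩)).symm

/-- `f ↦ ‖f̂(u) − f(t)‖` is convex, so on a convex combination it is dominated by one of the
combined functions. -/
lemma omegaUW_convexHull (hhat : IsStoneCechExtension hat) (ℱ : Set (T →ᵇ ℂ)) (u : StoneCech T)
    (W : Set (StoneCech T)) : omegaUW hat (convexHull ℝ ℱ) u W = omegaUW hat ℱ u W := by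
  refine le_antisymm (omegaUW_le_iff.2 fun f hf t ht => ?_)
    (omegaUW_mono (subset_convexHull ℝ ℱ) le_rfl)
  have hconvex :=
    (convexOn_norm convex_univ).comp_linearMap ((hhat.evalSub u t).restrictScalars ℝ)
  obtain ⟨g, hg, hfg⟩ := hconvex.exists_ge_of_mem_convexHull (subset_univ ℱ) hf
  refine le_trans ?_ (edist_le_omegaUW hg ht)
  simpa [edist_dist, dist_eq_norm] using ENNReal.ofReal_le_ofReal hfg

lemma omegaMeasure_closure (hhat : IsStoneCechExtension hat) (ℱ : Set (T →ᵇ ℂ)) :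
    omegaMeasure hat (closure ℱ) = omegaMeasure hat ℱ := by
  simp only [omegaMeasure, omegaU_closure hhat]

lemma omegaMeasure_smul (hhat : IsStoneCechExtension hat) (l : ℂ) (ℱ : Set (T →ᵇ ℂ)) :
    omegaMeasure hat (l • ℱ) = (‖l‖₊ : ℝ≥0∞) * omegaMeasure hat ℱ := by
  simp only [omegaMeasure, omegaU_smul hhat, ENNReal.mul_iSup]

lemma omegaMeasure_union_finite (hhat : IsStoneCechExtension hat) (h𝒢 : 𝒢.Finite) :
    omegaMeasure hat (ℱ ∪ 𝒢) = omegaMeasure hat ℱ := by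
  simp only [omegaMeasure, omegaU_union_finite hhat h𝒢]

lemma omegaMeasure_convexHull (hhat : IsStoneCechExtension hat) (ℱ : Set (T →ᵇ ℂ)) :
    omegaMeasure hat (convexHull ℝ ℱ) = omegaMeasure hat ℱ := by
  simp only [omegaMeasure, omegaU, omegaUW_convexHull hhat]

lemma exists_finset_forall_dist_lt_of_omegaU_eq_zero (hω : ∀ u, omegaU hat ℱ u = 0) {δ : ℝ}
    (hδ : 0 < δ) : ∃ s : Finset T, ∀ x, ∃ y ∈ s, ∀ f ∈ ℱ, dist (f x) (f y) < δ := by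
  classical
  have hsmall : ∀ u, ∃ W, (IsOpen W ∧ u ∈ W) ∧ omegaUW hat ℱ u W < ENNReal.ofReal (δ / 2) :=
    fun u => by
      simpa only [omegaU, iInf_lt_iff, exists_prop] using
        (hω u).trans_lt (ENNReal.ofReal_pos.2 (half_pos hδ))
  choose W hW hWsmall using hsmall
  choose pt hpt using fun u => denseRange_stoneCechUnit.exists_mem_open (hW u).1 ⟨u, (hW u).2⟩
  obtain ⟨c, hc⟩ := isCompact_univ.elim_finite_subcover W (fun u => (hW u).1)
    fun u _ => mem_iUnion.2 ⟨u, (hW u).2⟩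
  refine ⟨c.image pt, fun x => ?_⟩
  obtain ⟨u, hu, hxu⟩ := mem_iUnion₂.1 (hc (mem_univ (stoneCechUnit x)))
  refine ⟨pt u, Finset.mem_image_of_mem pt hu, fun f hf => ?_⟩
  have hclose : ∀ t, stoneCechUnit t ∈ W u → dist (hat f u) (f t) < δ / 2 := fun t ht =>
    edist_lt_ofReal.1 ((edist_le_omegaUW hf ht).trans_lt (hWsmall u))
  calc dist (f x) (f (pt u)) ≤ dist (hat f u) (f x) + dist (hat f u) (f (pt u)) :=
        dist_triangle_left _ _ _
    _ < δ / 2 + δ / 2 := add_lt_add (hclose x hxu) (hclose _ (hpt u))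
    _ = δ := add_halves δ

end Omega

theorem BoundedContinuousFunction.totallyBounded_of_forall_exists_finset {α β : Type*}
    [TopologicalSpace α] [PseudoMetricSpace β] {ℱ : Set (α →ᵇ β)}
    (hnet : ∀ δ > 0, ∃ s : Finset α, ∀ x, ∃ y ∈ s, ∀ f ∈ ℱ, dist (f x) (f y) < δ)
    (hpt : ∀ x, IsCompact (closure ((fun f : α →ᵇ β => f x) '' ℱ))) : TotallyBounded ℱ := by
  refine Metric.totallyBounded_iff.2 fun ε hε => ?_
  obtain ⟨s, hs⟩ := hnet (ε / 4) (by positivity)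
  let P : (α →ᵇ β) → (s → β) := fun f y => f y
  have hP : TotallyBounded (P '' ℱ) :=
    (isCompact_univ_pi fun y : s => hpt y).totallyBounded.subset <| by
      rintro _ ⟨f, hf, rfl⟩ y -
      exact subset_closure (mem_image_of_mem _ hf)
  obtain ⟨𝒢, h𝒢ℱ, h𝒢, hcov⟩ := exists_subset_image_finite_and.1
    (Metric.finite_approx_of_totallyBounded hP (ε / 4) (by positivity))
  refine ⟨𝒢, h𝒢, fun f hf => ?_⟩
  obtain ⟨_, ⟨g, hg, rfl⟩, hfg⟩ := mem_iUnion₂.1 (hcov (mem_image_of_mem P hf))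
  refine mem_iUnion₂.2 ⟨g, hg, ?_⟩
  have hPfg : ∀ z : s, dist (f z) (g z) < ε / 4 := fun z =>
    (dist_le_pi_dist (P f) (P g) z).trans_lt hfg
  have hdist : dist f g ≤ 3 * (ε / 4) := (dist_le (by positivity)).2 fun x => by
    obtain ⟨z, hz, hxz⟩ := hs x
    calc dist (f x) (g x) ≤ dist (f x) (f z) + dist (f z) (g z) + dist (g z) (g x) :=
          dist_triangle4 _ _ _ _
      _ ≤ ε / 4 + ε / 4 + ε / 4 := by
          gcongr
          · exact (hxz f hf).le
          · exact (hPfg ⟨z, hz⟩).le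
          · rw [dist_comm]; exact (hxz g (h𝒢ℱ hg)).le
      _ = 3 * (ε / 4) := by ring
  rw [Metric.mem_ball]
  linarith

lemma isCompact_closure_iff_omegaMeasure_eq_zero {hat : (T →ᵇ ℂ) → C(StoneCech T, ℂ)}
    (hhat : IsStoneCechExtension hat) {ℱ : Set (T →ᵇ ℂ)} :
    IsCompact (closure ℱ) ↔
      omegaMeasure hat ℱ = 0 ∧ ∀ t, IsCompact (closure ((fun f : T →ᵇ ℂ => f t) '' ℱ)) := by
  rw [omegaMeasure, iSup_eq_zero]
  constructor
  · intro hℱ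
    refine ⟨omegaU_eq_zero_of_totallyBounded hhat (hℱ.totallyBounded.subset subset_closure),
      fun t => ?_⟩
    exact (hℱ.image (continuous_eval_const t)).closure_of_subset (image_mono subset_closure)
  · rintro ⟨hω, hpt⟩
    have hℱ : TotallyBounded ℱ := totallyBounded_of_forall_exists_finset
      (fun _ hδ => exists_finset_forall_dist_lt_of_omegaU_eq_zero hω hδ) hpt
    exact hℱ.closure.isCompact_of_isClosed isClosed_closure

noncomputable def etaMeasure {E : Type*} [PseudoMetricSpace E] (ξ : Set E → ℝ≥0∞)
    (ℱ : Set (T →ᵇ E)) : ℝ≥0∞ :=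
  ⨆ t, ξ ((fun f : T →ᵇ E => f t) '' ℱ)

section Eta

variable {E : Type*} {ξ : Set E → ℝ≥0∞}

lemma etaMeasure_eq_zero_iff [PseudoMetricSpace E] (hξ : ∀ A, ξ A = 0 ↔ IsCompact (closure A))
    {ℱ : Set (T →ᵇ E)} :
    etaMeasure ξ ℱ = 0 ↔ ∀ t, IsCompact (closure ((fun f : T →ᵇ E => f t) '' ℱ)) := by
  simp only [etaMeasure, iSup_eq_zero, hξ]

lemma etaMeasure_mono [PseudoMetricSpace E] (hξ : Monotone ξ) {ℱ 𝒢 : Set (T →ᵇ E)} (h : ℱ ⊆ 𝒢) :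
    etaMeasure ξ ℱ ≤ etaMeasure ξ 𝒢 :=
  iSup_mono fun _ => hξ (image_mono h)

lemma etaMeasure_closure [PseudoMetricSpace E] (hξ : Monotone ξ)
    (hξcl : ∀ A, ξ (closure A) = ξ A) (ℱ : Set (T →ᵇ E)) :
    etaMeasure ξ (closure ℱ) = etaMeasure ξ ℱ := by
  refine le_antisymm (iSup_mono fun t => ?_) (etaMeasure_mono hξ subset_closure)
  calc ξ ((fun f : T →ᵇ E => f t) '' closure ℱ)
      ≤ ξ (closure ((fun f : T →ᵇ E => f t) '' ℱ)) :=
        hξ (image_closure_subset_closure_image (continuous_eval_const t))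
    _ = ξ ((fun f : T →ᵇ E => f t) '' ℱ) := hξcl _

lemma etaMeasure_union_finite [PseudoMetricSpace E]
    (hξ : ∀ A B, B.Finite → Disjoint A B → ξ (A ∪ B) = ξ A) {ℱ 𝒢 : Set (T →ᵇ E)}
    (h𝒢 : 𝒢.Finite) : etaMeasure ξ (ℱ ∪ 𝒢) = etaMeasure ξ ℱ := by
  refine iSup_congr fun t => ?_
  rw [image_union, ← union_sdiff_self,
    hξ _ _ ((h𝒢.image _).subset sdiff_subset) disjoint_sdiff_self_right]

lemma etaMeasure_smul {𝕜 : Type*} [NormedField 𝕜] [NormedAddCommGroup E] [NormedSpace 𝕜 E]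
    (hξ : ∀ (l : 𝕜) (A : Set E), ξ (l • A) = (‖l‖₊ : ℝ≥0∞) * ξ A) (l : 𝕜) (ℱ : Set (T →ᵇ E)) :
    etaMeasure ξ (l • ℱ) = (‖l‖₊ : ℝ≥0∞) * etaMeasure ξ ℱ := by
  simp only [etaMeasure, ENNReal.mul_iSup, ← hξ]
  exact iSup_congr fun t => congrArg ξ (image_smul_set (evalCLM 𝕜 t) l ℱ)

lemma etaMeasure_convexHull [NormedAddCommGroup E] [NormedSpace ℝ E]
    (hξ : ∀ A, ξ (convexHull ℝ A) = ξ A) (ℱ : Set (T →ᵇ E)) :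
    etaMeasure ξ (convexHull ℝ ℱ) = etaMeasure ξ ℱ := by
  refine iSup_congr fun t => ?_
  change ξ ((evalCLM ℝ t).toLinearMap '' convexHull ℝ ℱ) = ξ ((evalCLM ℝ t).toLinearMap '' ℱ)
  rw [LinearMap.image_convexHull, hξ]

end Eta

theorem Omega_is_measure_of_noncompactness_general
    (hat : BoundedContinuousFunction T ℂ → C(StoneCech T, ℂ))
    (hhat : ∀ f : BoundedContinuousFunction T ℂ, ∀ t : T, hat f (stoneCechUnit t) = f t)
    (ξ : Set ℂ → ℝ≥0∞)
    (hξ1 : ∀ A : Set ℂ, ξ A = 0 ↔ IsCompact (closure A))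
    (hξ2 : ∀ A B : Set ℂ, A ⊆ B → ξ A ≤ ξ B)
    (hξ3 : ∀ A : Set ℂ, ξ (closure A) = ξ A)
    (hξ4 : ∀ (l : ℂ) (A : Set ℂ), ξ (l • A) = (‖l‖₊ : ℝ≥0∞) * ξ A)
    (hξ5 : ∀ A B : Set ℂ, B.Finite → Disjoint A B → ξ (A ∪ B) = ξ A)
    (hξ6 : ∀ A : Set ℂ, ξ (convexHull ℝ A) = ξ A)
    (Ω : Set (BoundedContinuousFunction T ℂ) → ℝ≥0∞)
    (hΩ : ∀ ℱ : Set (BoundedContinuousFunction T ℂ),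
      Ω ℱ = omegaMeasure hat ℱ +
        ⨆ t : T, ξ ((fun f : BoundedContinuousFunction T ℂ => f t) '' ℱ)) :
    (∀ ℱ : Set (BoundedContinuousFunction T ℂ), Ω ℱ = 0 ↔ IsCompact (closure ℱ)) ∧
    (∀ ℱ 𝒢 : Set (BoundedContinuousFunction T ℂ), ℱ ⊆ 𝒢 → Ω ℱ ≤ Ω 𝒢) ∧
    (∀ ℱ : Set (BoundedContinuousFunction T ℂ), Ω (closure ℱ) = Ω ℱ) ∧
    (∀ (l : ℂ) (ℱ : Set (BoundedContinuousFunction T ℂ)),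
      Ω (l • ℱ) = (‖l‖₊ : ℝ≥0∞) * Ω ℱ) ∧
    (∀ ℱ 𝒢 : Set (BoundedContinuousFunction T ℂ), 𝒢.Finite → Disjoint ℱ 𝒢 →
      Ω (ℱ ∪ 𝒢) = Ω ℱ) ∧
    (∀ ℱ : Set (BoundedContinuousFunction T ℂ), Ω (convexHull ℝ ℱ) = Ω ℱ) := by
  obtain rfl : Ω = fun ℱ => omegaMeasure hat ℱ + etaMeasure ξ ℱ := funext hΩ
  have hξ : Monotone ξ := fun A B => hξ2 A B
  refine ⟨fun ℱ => ?_, fun ℱ 𝒢 h => add_le_add (omegaMeasure_mono h) (etaMeasure_mono hξ h),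
    fun ℱ => ?_, fun l ℱ => ?_, fun ℱ 𝒢 h𝒢 _ => ?_, fun ℱ => ?_⟩
  · rw [add_eq_zero, etaMeasure_eq_zero_iff hξ1, isCompact_closure_iff_omegaMeasure_eq_zero hhat]
  · simp only [omegaMeasure_closure hhat, etaMeasure_closure hξ hξ3]
  · simp only [omegaMeasure_smul hhat, etaMeasure_smul hξ4, mul_add]
  · simp only [omegaMeasure_union_finite hhat h𝒢, etaMeasure_union_finite hξ5 h𝒢]
  · simp only [omegaMeasure_convexHull hhat, etaMeasure_convexHull hξ6]

/-- If `ξ` satisfies (MN1)–(MN6) on `𝒫(ℂ)`, then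
`Ω(ℱ) := ω(ℱ) + η(ℱ)`, where `η(ℱ) := sup_{t ∈ T} ξ({f t : f ∈ ℱ})`,
satisfies (MN1)–(MN6) on `𝒫(C^b(T))`; in particular `Ω(ℱ) = 0` iff `ℱ` is
relatively compact, so `Ω` is a measure of non-compactness on `C^b(T)`. -/
theorem Omega_is_measure_of_noncompactness [T35Space T]
    (hat : BoundedContinuousFunction T ℂ → C(StoneCech T, ℂ))
    (hhat : ∀ f : BoundedContinuousFunction T ℂ, ∀ t : T, hat f (stoneCechUnit t) = f t)
    (ξ : Set ℂ → ℝ≥0∞)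
    (hξ1 : ∀ A : Set ℂ, ξ A = 0 ↔ IsCompact (closure A))
    (hξ2 : ∀ A B : Set ℂ, A ⊆ B → ξ A ≤ ξ B)
    (hξ3 : ∀ A : Set ℂ, ξ (closure A) = ξ A)
    (hξ4 : ∀ (l : ℂ) (A : Set ℂ), ξ (l • A) = (‖l‖₊ : ℝ≥0∞) * ξ A)
    (hξ5 : ∀ A B : Set ℂ, B.Finite → Disjoint A B → ξ (A ∪ B) = ξ A)
    (hξ6 : ∀ A : Set ℂ, ξ (convexHull ℝ A) = ξ A)
    (Ω : Set (BoundedContinuousFunction T ℂ) → ℝ≥0∞)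
    (hΩ : ∀ ℱ : Set (BoundedContinuousFunction T ℂ),
      Ω ℱ = omegaMeasure hat ℱ +
        ⨆ t : T, ξ ((fun f : BoundedContinuousFunction T ℂ => f t) '' ℱ)) :
    (∀ ℱ : Set (BoundedContinuousFunction T ℂ), Ω ℱ = 0 ↔ IsCompact (closure ℱ)) ∧
    (∀ ℱ 𝒢 : Set (BoundedContinuousFunction T ℂ), ℱ ⊆ 𝒢 → Ω ℱ ≤ Ω 𝒢) ∧
    (∀ ℱ : Set (BoundedContinuousFunction T ℂ), Ω (closure ℱ) = Ω ℱ) ∧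
    (∀ (l : ℂ) (ℱ : Set (BoundedContinuousFunction T ℂ)),
      Ω (l • ℱ) = (‖l‖₊ : ℝ≥0∞) * Ω ℱ) ∧
    (∀ ℱ 𝒢 : Set (BoundedContinuousFunction T ℂ), 𝒢.Finite → Disjoint ℱ 𝒢 →
      Ω (ℱ ∪ 𝒢) = Ω ℱ) ∧
    (∀ ℱ : Set (BoundedContinuousFunction T ℂ), Ω (convexHull ℝ ℱ) = Ω ℱ) :=
  Omega_is_measure_of_noncompactness_general hat hhat ξ hξ1 hξ2 hξ3 hξ4 hξ5 hξ6 Ω hΩ
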